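/- Let (G, ℐ, ≻) be a matroid-constrained matching instance with partial-order preferences, let ℳ be a Pareto-optimal set of ℐ-constrained matchings, and let N be an ℐ-constrained matching, such that every agent is matched in N and in every M ∈ ℳ, and M(A) and N(A) are bases of ℐ for all M ∈ ℳ. Fix M ∈ ℳ and a bijection f : N(A) → M(A) with f(o) ∈ C(M(A), o) for all o ∈ N(A), and let σ be the permutation of the agent set A defined by σ(a) = the unique agent b with M(b) = f(N(a)). Define A₊ = {a : N ≻_a M' for all M' ∈ ℳ} and A₋ = {a : M' ≻_a N for some M' ∈ ℳ}. Then for every a₊ ∈ A₊, the σ-orbit of a₊ contains some agent of A₋; in particular, σ(a₊) ≠ a₊. -/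

import Mathlib

/-!
Suppose no agent on the `σ`-orbit of `a₊` lies in `A₋`. The orbit is a closed walk in the
exchange graph (`a → σ a` is an arc since `M(σ a) ∈ C(M(A), N(a))`), and shortcutting along
chords turns it into a chordless cycle through `a₊` inside the orbit. Along a chordless cycle
the fundamental-circuit exchanges are triangular, so they can be performed simultaneously:
giving the agents of the cycle their `N`-objects and everybody else their `M`-objects is again
an `ℐ`-constrained matching. Trading `M` for it in `ℳ` leaves nobody worse off (agents off the
cycle keep their object, agents on it are outside `A₋`) and strictly improves `a₊ ∈ A₊`,
contradicting Pareto-optimality. If `σ a₊ = a₊`, then `a₊` would lie in both `A₊` and `A₋`.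
-/

open scoped Classical

/-- A matching in a bipartite graph with agent set `A`, object set `O` and adjacency
relation `adj`, represented by the partial assignment `M : A → Option O` of objects to
agents: matched pairs are edges, and each object is matched to at most one agent. -/
def IsMatching {A O : Type*} (adj : A → O → Prop) (M : A → Option O) : Prop :=
  (∀ a o, M a = some o → adj a o) ∧
  (∀ a a' o, M a = some o → M a' = some o → a = a')

/-- The lifted strict preference of agent `a` over matchings: `M ≻ₐ N` iff
`M(a) ≻ₐ N(a)`, where any assigned object is preferred to being unmatched. -/
def PrefM {A O : Type*} (pref : A → O → O → Prop) (a : A) (M N : A → Option O) : Prop :=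
  (∃ o o', M a = some o ∧ N a = some o' ∧ pref a o o') ∨
  (∃ o, M a = some o ∧ N a = none)

/-- `pref a` is a strict partial order on the objects adjacent to `a`. -/
def IsPrefOrder {A O : Type*} (adj : A → O → Prop) (pref : A → O → O → Prop) : Prop :=
  ∀ a : A, (∀ o, ¬ pref a o o) ∧
    (∀ o o' o'', pref a o o' → pref a o' o'' → pref a o o'') ∧
    (∀ o o', pref a o o' → adj a o ∧ adj a o')

/-- A set `Y` of matchings Pareto-dominates a set `Z`. -/
def Dominates {A O : Type*} (pref : A → O → O → Prop)
    (Y Z : Set (A → Option O)) : Prop :=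
  Y.ncard ≤ Z.ncard ∧
  (∀ a : A, ∃ MY ∈ Y, ∀ MZ ∈ Z, ¬ PrefM pref a MZ MY) ∧
  (∃ a : A, ∃ MY ∈ Y, ∀ MZ ∈ Z, PrefM pref a MY MZ)

/-- `Mset` is Pareto-optimal: no set of feasible matchings Pareto-dominates it. -/
def ParetoOptimal {A O : Type*} (pref : A → O → O → Prop) (F : Set (A → Option O))
    (Mset : Set (A → Option O)) : Prop :=
  ¬ ∃ Y : Set (A → Option O), Y ⊆ F ∧ Dominates pref Y Mset

/-- The set `M(A)` of objects matched to agents. -/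
def matchedObjs {A O : Type*} (M : A → Option O) : Set O := {o | ∃ a, M a = some o}

/-- A matching is `ℐ`-constrained if the set of matched objects is independent. -/
def IsConstrained {A O : Type*} (adj : A → O → Prop) (Mat : Matroid O)
    (M : A → Option O) : Prop :=
  IsMatching adj M ∧ Mat.Indep (matchedObjs M)

/-- The fundamental circuit `C(X, o)` of `o` with respect to a basis `X`. -/
noncomputable def fundCircuit {O : Type*} (Mat : Matroid O) (X : Set O) (o : O) : Set O :=
  if o ∈ X then {o} else {x ∈ X | Mat.Indep (insert o (X \ {x}))}

/-- The exchange graph `D_{N→M}` on the agents, for fully matched matchings given by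
`m n : A → O`: there is an arc `(a, b)` whenever `M(b) ∈ C(M(A), N(a))`. -/
def exchArc {A O : Type*} (Mat : Matroid O) (m n : A → O) (a b : A) : Prop :=
  m b ∈ fundCircuit Mat (Set.range m) (n a)

open Set

section FundamentalCircuit

variable {O : Type*} {Mat : Matroid O} {X : Set O} {o x : O}

lemma fundCircuit_subset (Mat : Matroid O) (X : Set O) (o : O) : fundCircuit Mat X o ⊆ X := by
  unfold fundCircuit
  split_ifs with h
  · simpa using h
  · exact sep_subset X _

lemma fundCircuit_of_mem (h : o ∈ X) : fundCircuit Mat X o = {o} := if_pos h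

lemma mem_fundCircuit_of_notMem (h : o ∉ X) :
    x ∈ fundCircuit Mat X o ↔ x ∈ X ∧ Mat.Indep (insert o (X \ {x})) := by
  simp [fundCircuit, h]

lemma mem_ground_of_mem_fundCircuit (hX : X ⊆ Mat.E) (hx : x ∈ fundCircuit Mat X o) :
    o ∈ Mat.E := by
  by_cases ho : o ∈ X
  · exact hX ho
  · exact ((mem_fundCircuit_of_notMem ho).1 hx).2.subset_ground (mem_insert o _)

/-- For `o ∉ X` this is the spanning property of the circuit `insert o (C(X, o))`. -/
lemma mem_closure_sdiff_of_notMem_fundCircuit (hX : Mat.IsBase X) (ho : o ∈ Mat.E)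
    (hx : x ∉ fundCircuit Mat X o) : o ∈ Mat.closure (X \ {x}) := by
  by_cases hoX : o ∈ X
  · have hox : o ≠ x := by rintro rfl; simp [fundCircuit_of_mem hoX] at hx
    exact Mat.subset_closure _ (sdiff_subset.trans hX.subset_ground) ⟨hoX, hox⟩
  have hC := hX.fundCircuit_isCircuit ho hoX
  refine Mat.closure_subset_closure ?_
    (hC.mem_closure_sdiff_singleton_of_mem (Mat.mem_fundCircuit o X))
  rintro z ⟨hzC, hzo : z ≠ o⟩
  have hzX : z ∈ X := (Mat.fundCircuit_subset_insert o X hzC).resolve_left hzo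
  refine ⟨hzX, ?_⟩
  rintro rfl
  apply hx
  rw [mem_fundCircuit_of_notMem hoX, insert_sdiff_singleton_comm hzo.symm]
  exact ⟨hzX, (hX.indep.mem_fundCircuit_iff (by rwa [hX.closure_eq]) hoX).1 hzC⟩

end FundamentalCircuit

lemma Matroid.Indep.insert_indep_of_subset_closure {O : Type*} {M : Matroid O} {I B : Set O}
    {y : O} (hI : M.Indep I) (hIB : I ⊆ M.closure B) (hB : M.Indep (insert y B))
    (hyB : y ∉ B) : M.Indep (insert y I) := by
  obtain ⟨hyE, hyB⟩ := ((hB.subset (subset_insert y B)).insert_indep_iff_of_notMem hyB).1 hB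
  exact hI.insert_indep_iff.2
    (Or.inl ⟨hyE, fun h => hyB (M.closure_subset_closure_of_subset_closure hIB h)⟩)

/-- The exchanges can be performed one at a time: after the first `k` of them, everything
except `x k` is still spanned by `X \ {x k}`. -/
theorem indep_exchange_of_triangular {O : Type*} {Mat : Matroid O} {X : Set O}
    (hX : Mat.IsBase X) {t : ℕ} {x y : ℕ → O}
    (hxy : ∀ i < t, x i ∈ fundCircuit Mat X (y i))
    (htri : ∀ i j, i < j → j < t → x j ∉ fundCircuit Mat X (y i))
    (hinj : InjOn x (Iio t)) :
    Mat.Indep ((X \ x '' Iio t) ∪ y '' Iio t) := by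
  have hxX : ∀ i < t, x i ∈ X := fun i hi => fundCircuit_subset Mat X (y i) (hxy i hi)
  have hyE : ∀ i < t, y i ∈ Mat.E := fun i hi =>
    mem_ground_of_mem_fundCircuit hX.subset_ground (hxy i hi)
  have hx_eq : ∀ i < t, y i ∈ X → x i = y i := fun i hi h => by
    simpa [fundCircuit_of_mem h] using hxy i hi
  suffices ∀ k ≤ t, Mat.Indep ((X \ x '' Iio k) ∪ y '' Iio k) from this t le_rfl
  intro k
  induction k with
  | zero => intro; simpa using hX.indep
  | succ k ih =>
    intro hk
    have hkt : k < t := hk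
    set Z := (X \ x '' Iio k) ∪ y '' Iio k
    have hZ : Mat.Indep Z := ih (Nat.le_of_succ_le hk)
    have hxk_notMem : x k ∉ x '' Iio k := by
      rintro ⟨i, hi, h⟩
      exact (show i < k from hi).ne (hinj (lt_trans hi hkt) hkt h)
    have hy_ne : ∀ i < k, y i ≠ x k := by
      rintro i hi h
      exact hxk_notMem ⟨i, hi, (hx_eq i (hi.trans hkt) (h ▸ hxX k hkt)).trans h⟩
    have hsub : (X \ x '' Iio (k + 1)) ∪ y '' Iio (k + 1) ⊆ insert (y k) (Z \ {x k}) := by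
      rintro z (⟨hzX, hzx⟩ | ⟨i, hi, rfl⟩)
      · refine Or.inr ⟨Or.inl ⟨hzX, fun h => hzx (image_mono (Iio_subset_Iio k.le_succ) h)⟩,
          fun h => hzx ⟨k, Nat.lt_succ_self k, h.symm⟩⟩
      · rcases Nat.lt_succ_iff_lt_or_eq.1 hi with hi | rfl
        · exact Or.inr ⟨Or.inr ⟨i, hi, rfl⟩, hy_ne i hi⟩
        · exact Or.inl rfl
    refine Matroid.Indep.subset ?_ hsub
    by_cases hykX : y k ∈ X
    · refine hZ.subset (insert_subset ?_ sdiff_subset)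
      rw [← hx_eq k hkt hykX]
      exact Or.inl ⟨hxX k hkt, hxk_notMem⟩
    · have hB := ((mem_fundCircuit_of_notMem hykX).1 (hxy k hkt)).2
      refine (hZ.subset sdiff_subset).insert_indep_of_subset_closure ?_ hB (fun h => hykX h.1)
      rintro z ⟨⟨hzX, -⟩ | ⟨i, hi, rfl⟩, hzk⟩
      · exact Mat.subset_closure _ (sdiff_subset.trans hX.subset_ground) ⟨hzX, hzk⟩
      · exact mem_closure_sdiff_of_notMem_fundCircuit hX (hyE i (hi.trans hkt))
          (htri i k hi hkt)

section ClosedWalk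

variable {α : Type*} {r : α → α → Prop} {t : ℕ} {c : ℕ → α}

def IsClosedWalk (r : α → α → Prop) (t : ℕ) (c : ℕ → α) : Prop :=
  0 < t ∧ c t = c 0 ∧ ∀ i < t, r (c i) (c (i + 1))

def IsChordless (r : α → α → Prop) (t : ℕ) (c : ℕ → α) : Prop :=
  ∀ i j, i < j → j < t → ¬ r (c i) (c (j + 1))

lemma IsClosedWalk.succ_mem_image (hw : IsClosedWalk r t c) {i : ℕ} (hi : i < t) :
    c (i + 1) ∈ c '' Iio t := by
  rcases (Nat.succ_le_of_lt hi).lt_or_eq with h | h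
  · exact ⟨i + 1, h, rfl⟩
  · exact ⟨0, hw.1, by rw [← hw.2.1, ← h]⟩

lemma IsClosedWalk.shortcut (hw : IsClosedWalk r t c) {i j : ℕ} (hij : i < j) (hjt : j < t)
    (hr : r (c i) (c (j + 1))) :
    IsClosedWalk r (t - (j - i)) (fun l => if l ≤ i then c l else c (l + (j - i))) := by
  obtain ⟨-, hct, hstep⟩ := hw
  refine ⟨by omega, ?_, fun l hl => ?_⟩
  · simp only [if_neg (show ¬ t - (j - i) ≤ i by omega), if_pos (Nat.zero_le i),
      show t - (j - i) + (j - i) = t by omega, hct]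
  by_cases hli : l < i
  · simpa only [if_pos hli.le, if_pos (Nat.succ_le_of_lt hli)] using hstep l (by omega)
  by_cases hl_eq : l = i
  · subst hl_eq
    simpa only [le_refl, if_true, if_neg (Nat.not_succ_le_self l),
      show l + 1 + (j - l) = j + 1 by omega] using hr
  · simpa only [if_neg (show ¬ l ≤ i by omega), if_neg (show ¬ l + 1 ≤ i by omega),
      show l + 1 + (j - i) = l + (j - i) + 1 by omega] using hstep _ (by omega)

lemma IsClosedWalk.exists_chordless {P : α → Prop} (hw : IsClosedWalk r t c)
    (hP : ∀ i, P (c i)) :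
    ∃ t' c', IsClosedWalk r t' c' ∧ IsChordless r t' c' ∧ c' 0 = c 0 ∧ ∀ i, P (c' i) := by
  induction t using Nat.strong_induction_on generalizing c with
  | _ t ih =>
  by_cases hch : IsChordless r t c
  · exact ⟨t, c, hw, hch, rfl, hP⟩
  simp only [IsChordless, not_forall, not_not] at hch
  obtain ⟨i, j, hij, hjt, hr⟩ := hch
  obtain ⟨t', c', hw', hch', h0, hP'⟩ := ih _ (by omega) (hw.shortcut hij hjt hr)
    (fun l => by split_ifs <;> apply hP)
  exact ⟨t', c', hw', hch', h0.trans (if_pos (Nat.zero_le i)), hP'⟩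

lemma IsChordless.injOn_succ (hw : IsClosedWalk r t c) (hch : IsChordless r t c) :
    InjOn (fun i => c (i + 1)) (Iio t) := by
  intro i hi j hj (h : c (i + 1) = c (j + 1))
  by_contra hne
  rcases lt_or_gt_of_ne hne with hij | hji
  · exact hch i j hij hj (h ▸ hw.2.2 i hi)
  · exact hch j i hji hi (h ▸ hw.2.2 j hj)

end ClosedWalk

lemma Equiv.Perm.isClosedWalk_pow_apply {α : Type*} [Finite α] {r : α → α → Prop}
    (σ : Equiv.Perm α) (hσ : ∀ a, r a (σ a)) (a : α) :
    IsClosedWalk r (orderOf σ) (fun i => (σ ^ i) a) := by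
  refine ⟨orderOf_pos σ, by simp [pow_orderOf_eq_one], fun i _ => ?_⟩
  simpa only [pow_succ', Equiv.Perm.mul_apply] using hσ ((σ ^ i) a)

section Preference

variable {A O : Type*} {pref : A → O → O → Prop} {a : A} {M M' N N' K : A → Option O}

lemma IsPrefOrder.isStrictOrder {adj : A → O → Prop} (h : IsPrefOrder adj pref) (a : A) :
    IsStrictOrder O (pref a) where
  irrefl := (h a).1
  trans := (h a).2.1

lemma prefM_congr (hM : M a = M' a) (hN : N a = N' a) :
    PrefM pref a M N ↔ PrefM pref a M' N' := by
  simp only [PrefM, hM, hN]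

lemma PrefM.irrefl [Std.Irrefl (pref a)] : ¬ PrefM pref a M M := by
  rintro (⟨o, o', h, h', hp⟩ | ⟨o, h, h'⟩)
  · exact irrefl_of (pref a) o (Option.some.inj (h.symm.trans h') ▸ hp)
  · simp [h] at h'

lemma PrefM.trans [IsTrans O (pref a)] (h₁ : PrefM pref a M N) (h₂ : PrefM pref a N K) :
    PrefM pref a M K := by
  rcases h₁ with ⟨o₁, o₂, hM, hN, hp₁⟩ | ⟨o₁, hM, hN⟩
  · rcases h₂ with ⟨o₂', o₃, hN', hK, hp₂⟩ | ⟨o₂', hN', hK⟩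
    · cases hN.symm.trans hN'
      exact Or.inl ⟨o₁, o₃, hM, hK, trans_of (pref a) hp₁ hp₂⟩
    · exact Or.inr ⟨o₁, hM, hK⟩
  · rcases h₂ with ⟨o₂', o₃, hN', -, -⟩ | ⟨o₂', hN', -⟩ <;> simp [hN] at hN'

instance PrefM.isStrictOrder [IsStrictOrder O (pref a)] :
    IsStrictOrder (A → Option O) (PrefM pref a) where
  irrefl _ := PrefM.irrefl
  trans _ _ _ := PrefM.trans

lemma exists_maximal_prefM_of_prefM [Finite A] [Finite O] [IsStrictOrder O (pref a)]
    {Mset : Set (A → Option O)} {MZ : A → Option O} (hMZ : MZ ∈ Mset) (h : PrefM pref a MZ M) :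
    ∃ W ∈ Mset, PrefM pref a W M ∧ ∀ MZ ∈ Mset, ¬ PrefM pref a MZ W := by
  obtain ⟨W, ⟨hW, hWM⟩, hmax⟩ := (Finite.wellFounded_of_trans_of_irrefl (PrefM pref a)).has_min
    {W ∈ Mset | PrefM pref a W M} ⟨MZ, hMZ, h⟩
  exact ⟨W, hW, hWM, fun MZ hMZ hMZW => hmax MZ ⟨hMZ, hMZW.trans hWM⟩ hMZW⟩

/-- An agent who keeps its object of `M` but is beaten on `M` within `ℳ` is served by a
maximal such member of `ℳ`, which differs from `M` and so survives the trade. -/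
theorem not_paretoOptimal_of_trade [Finite A] [Finite O] {F Mset : Set (A → Option O)}
    [∀ a, IsStrictOrder O (pref a)]
    (hF : Mset ⊆ F) (hM : M ∈ Mset) (hM' : M' ∈ F)
    (hkeep : ∀ a, M' a = M a ∨ ∀ MZ ∈ Mset, ¬ PrefM pref a MZ M')
    (himp : ∃ a, ∀ MZ ∈ Mset, PrefM pref a M' MZ) :
    ¬ ParetoOptimal pref F Mset := by
  refine not_not.2 ⟨insert M' (Mset \ {M}), insert_subset hM' (sdiff_subset.trans hF), ?_, ?_, ?_⟩
  · calc (insert M' (Mset \ {M})).ncard ≤ (Mset \ {M}).ncard + 1 := ncard_insert_le _ _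
      _ = Mset.ncard := ncard_sdiff_singleton_add_one hM (toFinite Mset)
  · intro a
    rcases hkeep a with hMa | hsafe
    · by_cases hbeat : ∃ MZ ∈ Mset, PrefM pref a MZ M
      · obtain ⟨MZ, hMZ, h⟩ := hbeat
        obtain ⟨W, hW, hWM, hmax⟩ := exists_maximal_prefM_of_prefM hMZ h
        have hWne : W ≠ M := by rintro rfl; exact PrefM.irrefl hWM
        exact ⟨W, mem_insert_of_mem _ ⟨hW, hWne⟩, hmax⟩
      · push Not at hbeat
        exact ⟨M', mem_insert _ _, fun MZ hMZ h => hbeat MZ hMZ ((prefM_congr rfl hMa).1 h)⟩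
    · exact ⟨M', mem_insert _ _, hsafe⟩
  · obtain ⟨a, ha⟩ := himp
    exact ⟨a, M', mem_insert _ _, ha⟩

end Preference

section Exchange

variable {A O : Type*} {adj : A → O → Prop} {Mat : Matroid O} {m n : A → O}

lemma matchedObjs_some (f : A → O) : matchedObjs (fun a => some (f a)) = range f := by
  ext o
  simp [matchedObjs, eq_comm]

lemma isMatching_some_iff {f : A → O} :
    IsMatching adj (fun a => some (f a)) ↔ (∀ a, adj a (f a)) ∧ Function.Injective f := by
  refine ⟨fun ⟨hadj, hinj⟩ => ⟨fun a => hadj a _ rfl, fun a b h => hinj a b _ rfl (by rw [h])⟩,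
    fun ⟨hadj, hinj⟩ => ⟨fun a o h => Option.some.inj h ▸ hadj a,
      fun a b o ha hb => hinj (Option.some.inj (ha.trans hb.symm))⟩⟩

lemma eq_of_exchArc_of_mem_range {a b : A} (harc : exchArc Mat m n a b) (h : n a ∈ range m) :
    m b = n a := by
  simpa [exchArc, fundCircuit_of_mem h] using harc

theorem not_paretoOptimal_of_chordless_exchange_cycle [Finite A] [Finite O]
    {pref : A → O → O → Prop} [∀ a, IsStrictOrder O (pref a)] {Mset : Set (A → Option O)}
    (hfeas : ∀ M' ∈ Mset, IsConstrained adj Mat M')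
    (hmem : (fun a => some (m a)) ∈ Mset) (hmB : Mat.IsBase (range m))
    (hn : IsConstrained adj Mat (fun a => some (n a)))
    {t : ℕ} {c : ℕ → A} (hw : IsClosedWalk (exchArc Mat m n) t c)
    (hch : IsChordless (exchArc Mat m n) t c)
    (hplus : ∀ M' ∈ Mset, PrefM pref (c 0) (fun a => some (n a)) M')
    (hminus : ∀ i, ∀ M' ∈ Mset, ¬ PrefM pref (c i) M' (fun a => some (n a))) :
    ¬ ParetoOptimal pref {M' | IsConstrained adj Mat M'} Mset := by
  obtain ⟨hm_adj, hm_inj⟩ := isMatching_some_iff.1 (hfeas _ hmem).1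
  obtain ⟨hn_adj, hn_inj⟩ := isMatching_some_iff.1 hn.1
  set S := c '' Iio t
  have hindep : Mat.Indep ((range m \ m '' S) ∪ n '' S) := by
    have hx : (fun i => m (c (i + 1))) '' Iio t ⊆ m '' S := by
      rintro _ ⟨i, hi, rfl⟩
      exact mem_image_of_mem m (hw.succ_mem_image hi)
    refine (indep_exchange_of_triangular hmB hw.2.2 hch
      (hm_inj.injOn.comp (hch.injOn_succ hw) (mapsTo_univ _ _))).subset
      (union_subset_union (sdiff_subset_sdiff_right hx) (image_comp n c _).superset)
  have hdisj : ∀ a ∈ S, ∀ b ∉ S, n a ≠ m b := by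
    rintro _ ⟨i, hi, rfl⟩ b hb h
    have hb' := eq_of_exchArc_of_mem_range (hw.2.2 i hi) ⟨b, h.symm⟩
    exact hb (hm_inj (hb'.trans h) ▸ hw.succ_mem_image hi)
  have hswap : IsConstrained adj Mat (fun a => some (S.piecewise n m a)) := by
    refine ⟨isMatching_some_iff.2 ⟨fun a => ?_, (injective_piecewise_iff S).2
      ⟨hn_inj.injOn, hm_inj.injOn, hdisj⟩⟩, hindep.subset ?_⟩
    · by_cases ha : a ∈ S <;> simp [ha, hn_adj, hm_adj]
    · rw [matchedObjs_some, range_piecewise, image_compl_eq_range_sdiff_image hm_inj, union_comm]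
  refine not_paretoOptimal_of_trade hfeas hmem hswap (fun a => ?_)
    ⟨c 0, fun MZ hMZ => ?_⟩
  · by_cases ha : a ∈ S
    · refine Or.inr fun MZ hMZ h => ?_
      obtain ⟨i, -, rfl⟩ := id ha
      exact hminus i MZ hMZ ((prefM_congr rfl (by simp [ha])).1 h)
    · exact Or.inl (by simp [ha])
  · have h0 : c 0 ∈ S := ⟨0, hw.1, rfl⟩
    exact (prefM_congr (by simp [h0]) rfl).2 (hplus MZ hMZ)

end Exchange

theorem orbit_meets_Aminus_general
    {A O : Type*} [Fintype A] [Fintype O]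
    (adj : A → O → Prop) (pref : A → O → O → Prop)
    (hpref : IsPrefOrder adj pref)
    (Mat : Matroid O)
    (Mset : Set (A → Option O))
    (hfeas : ∀ M' ∈ Mset, IsConstrained adj Mat M')
    (hbases : ∀ M' ∈ Mset, Mat.IsBase (matchedObjs M'))
    (hPO : ParetoOptimal pref {M' | IsConstrained adj Mat M'} Mset)
    (m : A → O) (hmem : (fun a => some (m a)) ∈ Mset)
    (n : A → O) (hn : IsConstrained adj Mat (fun a => some (n a)))
    (σ : Equiv.Perm A)
    (hσ : ∀ a : A, m (σ a) ∈ fundCircuit Mat (Set.range m) (n a))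
    (aplus : A)
    (hplus : ∀ M' ∈ Mset, PrefM pref aplus (fun a => some (n a)) M') :
    (∃ k : ℕ, ∃ M' ∈ Mset, PrefM pref ((σ ^ k) aplus) M' (fun a => some (n a))) ∧
      σ aplus ≠ aplus := by
  have := hpref.isStrictOrder
  have hmB : Mat.IsBase (range m) := matchedObjs_some m ▸ hbases _ hmem
  have hmeets : ∃ k : ℕ, ∃ M' ∈ Mset, PrefM pref ((σ ^ k) aplus) M' (fun a => some (n a)) := by
    by_contra! hcon
    obtain ⟨t, c, hw, hch, hc0, hminus⟩ :=
      (σ.isClosedWalk_pow_apply (r := exchArc Mat m n) hσ aplus).exists_chordless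
        (P := fun b => ∀ M' ∈ Mset, ¬ PrefM pref b M' (fun a => some (n a))) hcon
    rw [pow_zero, Equiv.Perm.one_apply] at hc0
    exact not_paretoOptimal_of_chordless_exchange_cycle hfeas hmem hmB hn hw hch
      (hc0 ▸ hplus) hminus hPO
  refine ⟨hmeets, fun hfix => ?_⟩
  obtain ⟨k, M', hM', hk⟩ := hmeets
  rw [Equiv.Perm.pow_apply_eq_self_of_apply_eq_self hfix] at hk
  exact PrefM.irrefl ((hplus M' hM').trans hk)

/-- Let `ℳ` be a Pareto-optimal set of `ℐ`-constrained matchings and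
`N` an `ℐ`-constrained matching, all fully matched with matched object sets bases.
Fix `M ∈ ℳ` (given by `m`) and a permutation `σ` of the agents induced by a bijective
basis exchange, i.e. `M(σ a) ∈ C(M(A), N(a))` for all `a`. Then for every
`aplus ∈ A₊ = {a : ∀ M' ∈ ℳ, N ≻ₐ M'}`, the `σ`-orbit of `aplus` meets
`A₋ = {a : ∃ M' ∈ ℳ, M' ≻ₐ N}`; in particular `σ aplus ≠ aplus`. -/
theorem orbit_meets_Aminus
    {A O : Type*} [Fintype A] [Fintype O]
    (adj : A → O → Prop) (pref : A → O → O → Prop)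
    (hpref : IsPrefOrder adj pref)
    (Mat : Matroid O) (hE : Mat.E = Set.univ)
    (Mset : Set (A → Option O))
    (hfeas : ∀ M' ∈ Mset, IsConstrained adj Mat M')
    (hmatched : ∀ M' ∈ Mset, ∀ a : A, M' a ≠ none)
    (hbases : ∀ M' ∈ Mset, Mat.IsBase (matchedObjs M'))
    (hPO : ParetoOptimal pref {M' | IsConstrained adj Mat M'} Mset)
    (m : A → O) (hmem : (fun a => some (m a)) ∈ Mset)
    (n : A → O) (hn : IsConstrained adj Mat (fun a => some (n a)))
    (hnB : Mat.IsBase (Set.range n))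
    (σ : Equiv.Perm A)
    (hσ : ∀ a : A, m (σ a) ∈ fundCircuit Mat (Set.range m) (n a))
    (aplus : A)
    (hplus : ∀ M' ∈ Mset, PrefM pref aplus (fun a => some (n a)) M') :
    (∃ k : ℕ, ∃ M' ∈ Mset, PrefM pref ((σ ^ k) aplus) M' (fun a => some (n a))) ∧
      σ aplus ≠ aplus :=
  orbit_meets_Aminus_general adj pref hpref Mat Mset hfeas hbases hPO m hmem n hn σ hσ aplus hplus
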